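/- arXiv:1707.05475 — 2 statements merged into one kernel-verified Lean document; each statement's English description precedes it below -/
import Mathlib

section
/- If the set {A_{i,j} : i,j ∈ H} is irreducible and aperiodic, then for all z, w ∈ ℂ∖{0} such that z ≠ |z| or w ≠ |w| (i.e. z or w is not a positive real), spr(C(z,w)) < spr(C(|z|,|w|)). -/
namespace QBD

/-- The index set `H = {-1, 0, 1}`. -/
def Hs : Finset ℤ := {-1, 0, 1}

/-- A nonnegative matrix with unit row sums. -/
def IsStochastic {n : ℕ} (M : Matrix (Fin n) (Fin n) ℝ) : Prop :=
  (∀ i j, 0 ≤ M i j) ∧ ∀ i, ∑ j, M i j = 1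

/-- `μ` is an eigenvalue of the complex matrix `M`. -/
def IsEigC {n : ℕ} (M : Matrix (Fin n) (Fin n) ℂ) (μ : ℂ) : Prop :=
  ∃ v : Fin n → ℂ, v ≠ 0 ∧ M.mulVec v = μ • v

/-- Spectral radius of a complex matrix. -/
noncomputable def spr {n : ℕ} (M : Matrix (Fin n) (Fin n) ℂ) : ℝ :=
  sSup {r : ℝ | ∃ μ : ℂ, IsEigC M μ ∧ r = ‖μ‖}

/-- Spectral radius of a real matrix. -/
noncomputable def sprR {n : ℕ} (M : Matrix (Fin n) (Fin n) ℝ) : ℝ :=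
  spr (M.map Complex.ofReal)

open Classical in
/-- `n`-step transition probabilities of a Markov kernel on a countable state space. -/
noncomputable def stepN {S : Type*} (P : S → S → ℝ) : ℕ → S → S → ℝ
  | 0, s, t => if s = t then 1 else 0
  | n + 1, s, t => ∑' u, stepN P n s u * P u t

/-- Irreducibility of a Markov kernel. -/
def ChainIrreducible {S : Type*} (P : S → S → ℝ) : Prop :=
  ∀ s t : S, ∃ n : ℕ, 1 ≤ n ∧ 0 < stepN P n s t

/-- Aperiodicity of a Markov kernel: for every state, the gcd of return times is one. -/
def ChainAperiodic {S : Type*} (P : S → S → ℝ) : Prop :=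
  ∀ s : S, ∀ d : ℕ, (∀ n : ℕ, 1 ≤ n → 0 < stepN P n s s → d ∣ n) → d = 1

/-- Kernel of the chain on `ℤ² × S0` governed everywhere by `{A_{k,l}}`. -/
def fullKernel (s0 : ℕ) (A : ℤ → ℤ → Matrix (Fin s0) (Fin s0) ℝ) :
    (ℤ × ℤ × Fin s0) → (ℤ × ℤ × Fin s0) → ℝ := fun x y =>
  A (y.1 - x.1) (y.2.1 - x.2.1) x.2.2 y.2.2

/-- `C(z,w) = Σ_{i,j∈H} A_{i,j} z^i w^j` (real arguments). -/
noncomputable def CmatR (s0 : ℕ) (A : ℤ → ℤ → Matrix (Fin s0) (Fin s0) ℝ) (z w : ℝ) :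
    Matrix (Fin s0) (Fin s0) ℝ :=
  ∑ i ∈ Hs, ∑ j ∈ Hs, (z ^ i * w ^ j) • A i j

/-- `C(z,w) = Σ_{i,j∈H} A_{i,j} z^i w^j` (complex arguments). -/
noncomputable def CmatC (s0 : ℕ) (A : ℤ → ℤ → Matrix (Fin s0) (Fin s0) ℝ) (z w : ℂ) :
    Matrix (Fin s0) (Fin s0) ℂ :=
  ∑ i ∈ Hs, ∑ j ∈ Hs, (z ^ i * w ^ j) • (A i j).map Complex.ofReal

/-- `χ(z,w) = spr(C(z,w))`. -/
noncomputable def chi (s0 : ℕ) (A : ℤ → ℤ → Matrix (Fin s0) (Fin s0) ℝ) (z w : ℝ) : ℝ :=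
  sprR (CmatR s0 A z w)

/-- `Γ̄ = {(s1,s2) : χ(e^{s1}, e^{s2}) ≤ 1}`. -/
def GammaBar (s0 : ℕ) (A : ℤ → ℤ → Matrix (Fin s0) (Fin s0) ℝ) : Set (ℝ × ℝ) :=
  {p | chi s0 A (Real.exp p.1) (Real.exp p.2) ≤ 1}

end QBD

/-!
Expanding `C(z,w)ⁿ` along paths of the chain, whose `n`-step transition probabilities are `p_n`,
gives `(C(z,w)ⁿ)_{kl} = ∑_v p_n((0,0,k),(v,l)) z^{v₁} w^{v₂}`, so `|C(z,w)ⁿ| ≤ Bⁿ` entrywise for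
`B = C(|z|,|w|)`. Irreducibility and aperiodicity make every `p_n(x,y)` positive for large `n`.
Hence some power `Bᵐ` is entrywise positive, and for large `n` the diagonal entry above contains
the two nonzero terms `v = 0` and `v = e`, where `z^{e₁} w^{e₂}` is not a positive real, so
`|(C(z,w)ⁿ)_{kk}| < (Bⁿ)_{kk}`. Sandwiching this strict entry between two copies of `Bᵐ` gives
`|C(z,w)^N| ≤ q B^N` with `q < 1`, and Gelfand's formula turns this into
`ρ(C(z,w))^N ≤ q ρ(B)^N` with `0 < ρ(B) < ∞`.
-/

open Filter
open scoped NNReal ENNReal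

lemma exists_lt_one_forall_le_mul {α : Type*} [Finite α] [Nonempty α] {Z D Y : α → ℝ}
    (hZ : ∀ a, 0 ≤ Z a) (hD : ∀ a, 0 < D a) (h : ∀ a, Z a + D a ≤ Y a) :
    ∃ q : ℝ, 0 ≤ q ∧ q < 1 ∧ ∀ a, Z a ≤ q * Y a := by
  have hY : ∀ a, 0 < Y a := fun a => by linarith [hZ a, hD a, h a]
  obtain ⟨a₀, ha₀⟩ := Finite.exists_max fun a => Z a / Y a
  refine ⟨Z a₀ / Y a₀, div_nonneg (hZ a₀) (hY a₀).le,
    (div_lt_one (hY a₀)).2 (by linarith [hD a₀, h a₀]), fun a => ?_⟩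
  exact (div_le_iff₀ (hY a)).1 (ha₀ a)

lemma norm_sum_lt_sum_norm_of_not_sameRay {ι E : Type*} [NormedAddCommGroup E]
    [NormedSpace ℝ E] [StrictConvexSpace ℝ E] {s : Finset ι} {f : ι → E} {a b : ι}
    (ha : a ∈ s) (hb : b ∈ s) (hab : a ≠ b) (h : ¬SameRay ℝ (f a) (f b)) :
    ‖∑ i ∈ s, f i‖ < ∑ i ∈ s, ‖f i‖ := by
  classical
  have hb' : b ∈ s.erase a := Finset.mem_erase.2 ⟨hab.symm, hb⟩
  rw [← Finset.add_sum_erase s f ha, ← Finset.add_sum_erase _ f hb',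
    ← Finset.add_sum_erase s _ ha, ← Finset.add_sum_erase _ (fun i => ‖f i‖) hb', ← add_assoc,
    ← add_assoc]
  exact (norm_add_le _ _).trans_lt
    (add_lt_add_of_lt_of_le (norm_add_lt_of_not_sameRay h) (norm_sum_le _ _))

lemma Complex.not_sameRay_ofReal_ofReal_mul {p p' : ℝ} (hp : 0 < p) (hp' : 0 < p') {ζ : ℂ}
    (hζ : ζ ≠ ‖ζ‖) : ¬SameRay ℝ (p : ℂ) (p' * ζ) := by
  have hζ₀ : ζ ≠ 0 := by rintro rfl; simp at hζ
  rw [Complex.sameRay_iff, Complex.arg_ofReal_of_nonneg hp.le, Complex.arg_real_mul ζ hp',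
    eq_comm (a := (0 : ℝ)), Complex.arg_eq_zero_iff_zero_le]
  rintro (h | h | h)
  · exact hp.ne' (by exact_mod_cast h)
  · exact mul_ne_zero (by exact_mod_cast hp'.ne') hζ₀ h
  · exact hζ (Complex.eq_coe_norm_of_nonneg h)

lemma ENNReal.lt_of_pow_le_mul_pow {a b : ℝ≥0∞} {q : ℝ≥0} {N : ℕ} (hq : q < 1)
    (hb₀ : b ≠ 0) (hb : b ≠ ⊤) (h : a ^ N ≤ q * b ^ N) : a < b := by
  by_contra! hba
  have hlt : (q : ℝ≥0∞) * b ^ N < 1 * b ^ N :=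
    ENNReal.mul_lt_mul_left (pow_ne_zero N hb₀) (ENNReal.pow_ne_top hb) (by exact_mod_cast hq)
  rw [one_mul] at hlt
  exact (((pow_le_pow_left' hba N).trans h).trans_lt hlt).false

section SpectralRadius

variable {A : Type*} [Ring A] [Algebra ℂ A]

lemma spectralRadius_pow_of_ne_zero (a : A) {n : ℕ} (hn : n ≠ 0) :
    spectralRadius ℂ (a ^ n) = spectralRadius ℂ a ^ n := by
  simp only [spectralRadius, spectrum.map_pow_of_pos a (Nat.pos_of_ne_zero hn), iSup_image,
    ENNReal.iSup₂_pow_of_ne_zero _ hn, nnnorm_pow, ENNReal.coe_pow]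

lemma spectralRadius_smul [Nontrivial A] (k : ℂ) (a : A) (ha : (spectrum ℂ a).Nonempty) :
    spectralRadius ℂ (k • a) = ‖k‖₊ * spectralRadius ℂ a := by
  simp only [spectralRadius, spectrum.smul_eq_smul k a ha, ← Set.image_smul, iSup_image,
    smul_eq_mul, nnnorm_mul, ENNReal.coe_mul, ENNReal.mul_iSup]

end SpectralRadius

lemma spectralRadius_le_of_forall_nnnorm_pow_le {A : Type*} [NormedRing A] [NormedAlgebra ℂ A]
    [CompleteSpace A] {a b : A} (h : ∀ n : ℕ, ‖a ^ n‖₊ ≤ ‖b ^ n‖₊) :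
    spectralRadius ℂ a ≤ spectralRadius ℂ b :=
  le_of_tendsto_of_tendsto' (spectrum.pow_nnnorm_pow_one_div_tendsto_nhds_spectralRadius a)
    (spectrum.pow_nnnorm_pow_one_div_tendsto_nhds_spectralRadius b) fun n =>
      ENNReal.rpow_le_rpow (ENNReal.coe_le_coe.2 (h n)) (by positivity)

namespace Matrix

variable {ι : Type*} [Fintype ι]

lemma norm_mul_apply_le_of_le {X X' : Matrix ι ι ℂ} {U V : Matrix ι ι ℝ}
    (hX : ∀ i j, ‖X i j‖ ≤ U i j) (hX' : ∀ i j, ‖X' i j‖ ≤ V i j) (i j : ι) :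
    ‖(X * X') i j‖ ≤ (U * V) i j := by
  rw [mul_apply, mul_apply]
  refine (norm_sum_le _ _).trans (Finset.sum_le_sum fun a _ => ?_)
  rw [norm_mul]
  exact mul_le_mul (hX i a) (hX' a j) (norm_nonneg _) ((norm_nonneg _).trans (hX i a))

lemma norm_pow_apply_le_of_le [DecidableEq ι] {X : Matrix ι ι ℂ} {Y : Matrix ι ι ℝ}
    (h : ∀ i j, ‖X i j‖ ≤ Y i j) (n : ℕ) (i j : ι) : ‖(X ^ n) i j‖ ≤ (Y ^ n) i j := by
  induction n generalizing i j with
  | zero => by_cases hij : i = j <;> simp [hij]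
  | succ n ih => rw [pow_succ, pow_succ]; exact norm_mul_apply_le_of_le ih h i j

lemma map_ofReal_pow [DecidableEq ι] (Y : Matrix ι ι ℝ) (n : ℕ) :
    (Y ^ n).map Complex.ofReal = Y.map Complex.ofReal ^ n :=
  Y.map_pow Complex.ofRealHom n

lemma mul_mul_apply_add_le {S G Y : Matrix ι ι ℝ} (hS : ∀ i j, 0 ≤ S i j)
    (hGY : ∀ i j, G i j ≤ Y i j) (k i j : ι) :
    (S * G * S) i j + (Y k k - G k k) * (S i k * S k j) ≤ (S * Y * S) i j := by
  have hdiff : (S * Y * S) i j - (S * G * S) i j = ∑ q, ∑ p, S i p * (Y - G) p q * S q j := by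
    simp only [mul_apply, Finset.sum_mul, sub_apply, ← Finset.sum_sub_distrib]
    exact Finset.sum_congr rfl fun q _ => Finset.sum_congr rfl fun p _ => by ring
  have hterm : ∀ p q, 0 ≤ S i p * (Y - G) p q * S q j := fun p q =>
    mul_nonneg (mul_nonneg (hS i p) (sub_nonneg.2 (hGY p q))) (hS q j)
  have : S i k * (Y - G) k k * S k j ≤ ∑ q, ∑ p, S i p * (Y - G) p q * S q j :=
    calc S i k * (Y - G) k k * S k j ≤ ∑ p, S i p * (Y - G) p k * S k j :=
          Finset.single_le_sum (fun p _ => hterm p k) (Finset.mem_univ k)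
      _ ≤ _ := Finset.single_le_sum (f := fun q => ∑ p, S i p * (Y - G) p q * S q j)
          (fun q _ => Finset.sum_nonneg fun p _ => hterm p q) (Finset.mem_univ k)
  rw [sub_apply] at this
  linarith

section LinftyNorm

attribute [local instance] Matrix.linftyOpNormedAddCommGroup Matrix.linftyOpNormedRing
  Matrix.linftyOpNormedAlgebra

lemma linfty_opNNNorm_le_of_norm_apply_le {X : Matrix ι ι ℂ} {Y : Matrix ι ι ℝ}
    (h : ∀ i j, ‖X i j‖ ≤ Y i j) : ‖X‖₊ ≤ ‖Y.map Complex.ofReal‖₊ := by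
  rw [linfty_opNNNorm_def, linfty_opNNNorm_def]
  refine Finset.sup_mono_fun fun i _ => Finset.sum_le_sum fun j _ => ?_
  rw [← NNReal.coe_le_coe, coe_nnnorm, coe_nnnorm, map_apply, Complex.norm_real]
  exact (h i j).trans (le_abs_self _)

lemma spectralRadius_le_of_norm_apply_le [DecidableEq ι] {X : Matrix ι ι ℂ} {Y : Matrix ι ι ℝ}
    (h : ∀ i j, ‖X i j‖ ≤ Y i j) :
    spectralRadius ℂ X ≤ spectralRadius ℂ (Y.map Complex.ofReal) := by
  refine spectralRadius_le_of_forall_nnnorm_pow_le fun n => ?_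
  rw [← map_ofReal_pow]
  exact linfty_opNNNorm_le_of_norm_apply_le (norm_pow_apply_le_of_le h n)

lemma spectralRadius_ne_top [DecidableEq ι] (X : Matrix ι ι ℂ) : spectralRadius ℂ X ≠ ⊤ := by
  refine ne_top_of_le_ne_top ?_ (spectrum.spectralRadius_le_pow_nnnorm_pow_one_div ℂ X 0)
  simp [ENNReal.mul_eq_top]

end LinftyNorm

lemma spectralRadius_map_ofReal_pos [Nonempty ι] [DecidableEq ι] {B : Matrix ι ι ℝ} {m : ℕ}
    (hm : m ≠ 0) (hpos : ∀ i j, 0 < (B ^ m) i j) :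
    0 < spectralRadius ℂ (B.map Complex.ofReal) := by
  obtain ⟨i₀, hi₀⟩ := Finite.exists_min fun i => (B ^ m) i i
  set c := (B ^ m) i₀ i₀
  have hle : spectralRadius ℂ (algebraMap ℂ (Matrix ι ι ℂ) c) ≤
      spectralRadius ℂ (B.map Complex.ofReal) ^ m := by
    rw [← spectralRadius_pow_of_ne_zero _ hm, ← map_ofReal_pow]
    refine spectralRadius_le_of_norm_apply_le fun i j => ?_
    rcases eq_or_ne i j with rfl | hij
    · simpa [algebraMap_matrix_apply, abs_of_pos (show 0 < c from hpos i₀ i₀)] using hi₀ i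
    · simpa [algebraMap_matrix_apply, hij] using (hpos i j).le
  have hc : spectralRadius ℂ (algebraMap ℂ (Matrix ι ι ℂ) c) = ‖(c : ℂ)‖₊ := by
    simp [spectralRadius, spectrum.scalar_eq]
  refine pos_iff_ne_zero.2 fun h₀ => ?_
  rw [hc, h₀, zero_pow hm, nonpos_iff_eq_zero, ENNReal.coe_eq_zero, nnnorm_eq_zero] at hle
  exact (hpos i₀ i₀).ne' (by exact_mod_cast hle)

end Matrix

namespace QBD

lemma isEigC_iff_mem_spectrum {n : ℕ} (M : Matrix (Fin n) (Fin n) ℂ) (μ : ℂ) :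
    IsEigC M μ ↔ μ ∈ spectrum ℂ M := by
  rw [← Matrix.spectrum_toLin', ← Module.End.hasEigenvalue_iff_mem_spectrum,
    Module.End.hasEigenvalue_iff, Submodule.ne_bot_iff]
  simp [IsEigC, Matrix.toLin'_apply, and_comm]

lemma spr_eq_toReal_spectralRadius {n : ℕ} (M : Matrix (Fin n) (Fin n) ℂ) :
    spr M = (spectralRadius ℂ M).toReal := by
  have hle : ∀ μ ∈ spectrum ℂ M, ‖μ‖ ≤ (spectralRadius ℂ M).toReal := fun μ hμ =>
    (ENNReal.toReal_le_toReal ENNReal.coe_ne_top (Matrix.spectralRadius_ne_top M)).2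
      (le_iSup₂ (f := fun μ (_ : μ ∈ spectrum ℂ M) => (‖μ‖₊ : ℝ≥0∞)) μ hμ)
  simp only [spr, isEigC_iff_mem_spectrum]
  refine le_antisymm (Real.sSup_le ?_ ENNReal.toReal_nonneg) ?_
  · rintro _ ⟨μ, hμ, rfl⟩
    exact hle μ hμ
  · refine ENNReal.toReal_le_of_le_ofReal (Real.sSup_nonneg ?_) (iSup₂_le fun μ hμ => ?_)
    · rintro _ ⟨μ, -, rfl⟩
      exact norm_nonneg μ
    · rw [← ENNReal.ofReal_coe_nnreal, coe_nnnorm]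
      exact ENNReal.ofReal_le_ofReal
        (le_csSup ⟨_, by rintro _ ⟨ν, hν, rfl⟩; exact hle ν hν⟩ ⟨μ, hμ, rfl⟩)

section MarkovKernel

variable {S : Type*} {P : S → S → ℝ}

lemma stepN_zero_self (x : S) : stepN P 0 x x = 1 := by
  simp [stepN]

lemma stepN_zero_of_ne {x y : S} (h : x ≠ y) : stepN P 0 x y = 0 := by
  simp [stepN, h]

lemma stepN_succ (n : ℕ) (x y : S) : stepN P (n + 1) x y = ∑' u, stepN P n x u * P u y := rfl

lemma exists_stepN_ne_zero_of_succ {n : ℕ} {x y : S} (h : stepN P (n + 1) x y ≠ 0) :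
    ∃ u, stepN P n x u ≠ 0 ∧ P u y ≠ 0 := by
  rw [stepN_succ] at h
  by_contra! hall
  refine h ((tsum_congr fun u => ?_).trans tsum_zero)
  by_cases hu : stepN P n x u = 0
  · rw [hu, zero_mul]
  · rw [hall u hu, mul_zero]

variable (hP : ∀ x y, 0 ≤ P x y)
include hP

lemma stepN_nonneg (n : ℕ) (x y : S) : 0 ≤ stepN P n x y := by
  induction n generalizing y with
  | zero => by_cases h : x = y <;> simp [stepN, h]
  | succ n ih => exact tsum_nonneg fun u => mul_nonneg (ih u) (hP u y)

omit hP in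
lemma stepN_support_finite (hfin : ∀ x, (Function.support (P x)).Finite) (n : ℕ) (x : S) :
    (Function.support (stepN P n x)).Finite := by
  induction n with
  | zero =>
    refine (Set.finite_singleton x).subset fun y hy => ?_
    by_contra hxy
    exact hy (stepN_zero_of_ne (Ne.symm hxy))
  | succ n ih =>
    refine (ih.biUnion fun u _ => hfin u).subset fun y hy => ?_
    obtain ⟨u, hu, huy⟩ := exists_stepN_ne_zero_of_succ hy
    exact Set.mem_biUnion hu huy

lemma stepN_pos_add (hfin : ∀ x, (Function.support (P x)).Finite) {m n : ℕ} {x u y : S}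
    (hxu : 0 < stepN P m x u) (huy : 0 < stepN P n u y) : 0 < stepN P (m + n) x y := by
  induction n generalizing y with
  | zero =>
    by_cases h : u = y
    · rwa [← h]
    · rw [stepN_zero_of_ne h] at huy
      exact absurd huy (lt_irrefl 0)
  | succ n ih =>
    obtain ⟨v, huv, hvy⟩ := exists_stepN_ne_zero_of_succ huy.ne'
    have hxv := ih ((stepN_nonneg hP n u v).lt_of_ne' huv)
    have hsum : Summable fun w => stepN P (m + n) x w * P w y :=
      summable_of_hasFiniteSupport <| (stepN_support_finite hfin (m + n) x).subset
        (Function.support_mul_subset_left _ _)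
    calc 0 < stepN P (m + n) x v * P v y := mul_pos hxv ((hP v y).lt_of_ne' hvy)
      _ ≤ stepN P (m + n + 1) x y :=
        hsum.le_tsum v fun w _ => mul_nonneg (stepN_nonneg hP _ x w) (hP w y)

/-- The return times to `x` form an additive semigroup with gcd `1`, so they contain every
large integer. -/
lemma eventually_stepN_self_pos (hfin : ∀ x, (Function.support (P x)).Finite)
    (hap : ChainAperiodic P) (x : S) : ∀ᶠ n in atTop, 0 < stepN P n x x := by
  set R := {n : ℕ | 1 ≤ n ∧ 0 < stepN P n x x}
  have hgcd : Nat.setGcd R = 1 :=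
    hap x _ fun n h1 h2 => Nat.setGcd_dvd_of_mem ⟨h1, h2⟩
  have hclosure : ∀ n ∈ AddSubmonoid.closure R, 0 < stepN P n x x := fun n hn =>
    AddSubmonoid.closure_induction (fun n hn => hn.2) (by rw [stepN_zero_self]; exact one_pos)
      (fun _ _ _ _ => stepN_pos_add hP hfin) hn
  obtain ⟨N, hN⟩ := Nat.exists_mem_closure_of_ge (s := R)
  exact eventually_atTop.2 ⟨N, fun n hn => hclosure n (hN n hn (by rw [hgcd]; exact one_dvd n))⟩

lemma eventually_stepN_pos (hfin : ∀ x, (Function.support (P x)).Finite)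
    (hirr : ChainIrreducible P) (hap : ChainAperiodic P) (x y : S) :
    ∀ᶠ n in atTop, 0 < stepN P n x y := by
  obtain ⟨m, -, hm⟩ := hirr x y
  filter_upwards [eventually_ge_atTop m,
    (tendsto_sub_atTop_nat m).eventually (eventually_stepN_self_pos hP hfin hap y)] with n hn hpos
  simpa only [Nat.add_sub_cancel' hn] using stepN_pos_add hP hfin hm hpos

end MarkovKernel

noncomputable def box (n : ℕ) : Finset (ℤ × ℤ) := Finset.Icc (-(n : ℤ)) n ×ˢ Finset.Icc (-(n : ℤ)) n

lemma mem_box {n : ℕ} {v : ℤ × ℤ} : v ∈ box n ↔ |v.1| ≤ n ∧ |v.2| ≤ n := by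
  simp [box, abs_le]

lemma box_mono {m n : ℕ} (h : m ≤ n) : box m ⊆ box n := fun v hv => by
  rw [mem_box] at hv ⊢
  exact ⟨hv.1.trans (by exact_mod_cast h), hv.2.trans (by exact_mod_cast h)⟩

lemma Hs_product_Hs_eq_box_one : Hs ×ˢ Hs = box 1 := by
  simp only [Hs, box]
  decide

lemma CmatC_apply {s0 : ℕ} (A : ℤ → ℤ → Matrix (Fin s0) (Fin s0) ℝ) (z w : ℂ) (k l : Fin s0) :
    CmatC s0 A z w k l = ∑ d ∈ box 1, (A d.1 d.2 k l : ℂ) * (z ^ d.1 * w ^ d.2) := by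
  rw [← Hs_product_Hs_eq_box_one, Finset.sum_product, CmatC]
  simp only [Matrix.sum_apply, Matrix.smul_apply, Matrix.map_apply, smul_eq_mul, mul_comm]

lemma CmatC_ofReal {s0 : ℕ} (A : ℤ → ℤ → Matrix (Fin s0) (Fin s0) ℝ) (r s : ℝ) :
    CmatC s0 A (r : ℂ) (s : ℂ) = (CmatR s0 A r s).map Complex.ofReal := by
  ext a b
  simp [CmatC, CmatR, Matrix.sum_apply]

section Kernel

variable {s0 : ℕ} {A : ℤ → ℤ → Matrix (Fin s0) (Fin s0) ℝ}
  (hAsupp : ∀ i j : ℤ, ¬(i ∈ Hs ∧ j ∈ Hs) → A i j = 0)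
include hAsupp

lemma mem_box_one_of_ne_zero {i j : ℤ} (h : A i j ≠ 0) : (i, j) ∈ box 1 := by
  rw [← Hs_product_Hs_eq_box_one, Finset.mem_product]
  by_contra hij
  exact h (hAsupp i j hij)

lemma mem_box_of_stepN_ne_zero {n : ℕ} {x y : ℤ × ℤ × Fin s0}
    (h : stepN (fullKernel s0 A) n x y ≠ 0) : (y.1 - x.1, y.2.1 - x.2.1) ∈ box n := by
  induction n generalizing y with
  | zero =>
    by_cases hxy : x = y
    · simp [hxy, mem_box]
    · exact absurd (stepN_zero_of_ne hxy) h
  | succ n ih =>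
    obtain ⟨u, hu, huy⟩ := exists_stepN_ne_zero_of_succ h
    have h1 := mem_box.1 (ih hu)
    have h2 := mem_box_one_of_ne_zero hAsupp (i := y.1 - u.1) (j := y.2.1 - u.2.1)
      fun hA => huy (by simp [fullKernel, hA])
    simp only [mem_box, abs_le, Nat.cast_add, Nat.cast_one] at h1 h2 ⊢
    omega

lemma fullKernel_support_finite (x : ℤ × ℤ × Fin s0) :
    (Function.support (fullKernel s0 A x)).Finite := by
  refine ((box 1 ×ˢ Finset.univ).finite_toSet.image
    fun p : (ℤ × ℤ) × Fin s0 => (x.1 + p.1.1, x.2.1 + p.1.2, p.2)).subset fun y hy => ?_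
  have hA : A (y.1 - x.1) (y.2.1 - x.2.1) ≠ 0 := fun hA => hy (by simp [fullKernel, hA])
  exact ⟨((y.1 - x.1, y.2.1 - x.2.1), y.2.2), by simp [mem_box_one_of_ne_zero hAsupp hA],
    by simp⟩

lemma stepN_succ_origin (n : ℕ) (k l : Fin s0) (v : ℤ × ℤ) :
    stepN (fullKernel s0 A) (n + 1) (0, 0, k) (v.1, v.2, l) =
      ∑ u ∈ box n, ∑ a, stepN (fullKernel s0 A) n (0, 0, k) (u.1, u.2, a) *
        A (v.1 - u.1) (v.2 - u.2) a l := by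
  rw [stepN_succ, ← (Equiv.prodAssoc ℤ ℤ (Fin s0)).tsum_eq, ← Finset.sum_product',
    tsum_eq_sum (s := box n ×ˢ Finset.univ)]
  · rfl
  rintro ⟨u, a⟩ hu
  have hzero : stepN (fullKernel s0 A) n (0, 0, k) (u.1, u.2, a) = 0 := by
    by_contra h
    simpa [Finset.mem_product] using hu (by simpa using mem_box_of_stepN_ne_zero hAsupp h)
  simp [hzero]

lemma sum_box_succ_shift {z w : ℂ} (hz : z ≠ 0) (hw : w ≠ 0) {n : ℕ} {u : ℤ × ℤ}
    (hu : u ∈ box n) (a l : Fin s0) :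
    ∑ v ∈ box (n + 1), (A (v.1 - u.1) (v.2 - u.2) a l : ℂ) * (z ^ v.1 * w ^ v.2) =
      z ^ u.1 * w ^ u.2 * CmatC s0 A z w a l := by
  have hsub : (box 1).map (addLeftEmbedding u) ⊆ box (n + 1) := by
    intro v hv
    obtain ⟨d, hd, rfl⟩ := Finset.mem_map.1 hv
    simp only [mem_box, abs_le, addLeftEmbedding_apply, Prod.fst_add, Prod.snd_add,
      Nat.cast_add, Nat.cast_one] at hu hd ⊢
    omega
  rw [CmatC_apply, Finset.mul_sum, ← Finset.sum_subset hsub, Finset.sum_map]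
  · refine Finset.sum_congr rfl fun d _ => ?_
    simp only [addLeftEmbedding_apply, Prod.fst_add, Prod.snd_add, add_sub_cancel_left,
      zpow_add₀ hz, zpow_add₀ hw]
    ring
  · intro v _ hv
    have hA : A (v.1 - u.1) (v.2 - u.2) = 0 := by
      by_contra hA
      exact hv (Finset.mem_map.2 ⟨_, mem_box_one_of_ne_zero hAsupp hA, by ext <;> simp⟩)
    simp [hA]

lemma CmatC_pow_apply {z w : ℂ} (hz : z ≠ 0) (hw : w ≠ 0) (n : ℕ) (k l : Fin s0) :
    (CmatC s0 A z w ^ n) k l =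
      ∑ v ∈ box n,
        (stepN (fullKernel s0 A) n (0, 0, k) (v.1, v.2, l) : ℂ) * (z ^ v.1 * w ^ v.2) := by
  induction n generalizing l with
  | zero =>
    have hbox : box 0 = {(0, 0)} := by decide
    by_cases hkl : k = l
    · simp [hbox, hkl, stepN_zero_self]
    · simp [hbox, hkl, stepN_zero_of_ne]
  | succ n ih =>
    calc (CmatC s0 A z w ^ (n + 1)) k l
        = ∑ a, ∑ u ∈ box n, (stepN (fullKernel s0 A) n (0, 0, k) (u.1, u.2, a) : ℂ) *
            (z ^ u.1 * w ^ u.2 * CmatC s0 A z w a l) := by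
          simp only [pow_succ, Matrix.mul_apply, ih, Finset.sum_mul, mul_assoc]
      _ = ∑ a, ∑ u ∈ box n, ∑ v ∈ box (n + 1),
            (stepN (fullKernel s0 A) n (0, 0, k) (u.1, u.2, a) : ℂ) *
            (A (v.1 - u.1) (v.2 - u.2) a l * (z ^ v.1 * w ^ v.2)) := by
          refine Finset.sum_congr rfl fun a _ => Finset.sum_congr rfl fun u hu => ?_
          rw [← sum_box_succ_shift hAsupp hz hw hu, Finset.mul_sum]
      _ = _ := by
          rw [Finset.sum_comm, Finset.sum_congr rfl fun u _ => Finset.sum_comm, Finset.sum_comm]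
          simp only [stepN_succ_origin hAsupp, Complex.ofReal_sum, Complex.ofReal_mul,
            Finset.sum_mul, mul_assoc]

omit hAsupp in
lemma norm_ofReal_mul_zpow {p : ℝ} (hp : 0 ≤ p) (z w : ℂ) (v : ℤ × ℤ) :
    ‖(p : ℂ) * (z ^ v.1 * w ^ v.2)‖ = p * (‖z‖ ^ v.1 * ‖w‖ ^ v.2) := by
  rw [norm_mul, norm_mul, norm_zpow, norm_zpow, Complex.norm_of_nonneg hp]

variable (hAnn : ∀ i j : ℤ, ∀ k l, 0 ≤ A i j k l)
include hAnn

lemma CmatR_norm_pow_apply {z w : ℂ} (hz : z ≠ 0) (hw : w ≠ 0) (n : ℕ) (k l : Fin s0) :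
    (CmatR s0 A ‖z‖ ‖w‖ ^ n) k l =
      ∑ v ∈ box n,
        ‖(stepN (fullKernel s0 A) n (0, 0, k) (v.1, v.2, l) : ℂ) * (z ^ v.1 * w ^ v.2)‖ := by
  have hP : ∀ x y, 0 ≤ fullKernel s0 A x y := fun _ _ => hAnn _ _ _ _
  apply Complex.ofReal_injective
  rw [← Matrix.map_apply (f := Complex.ofReal), Matrix.map_ofReal_pow, ← CmatC_ofReal A,
    CmatC_pow_apply hAsupp (by simpa using hz) (by simpa using hw)]
  simp only [norm_ofReal_mul_zpow (stepN_nonneg hP _ _ _), Complex.ofReal_sum, Complex.ofReal_mul,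
    Complex.ofReal_zpow]

lemma norm_CmatC_pow_apply_le {z w : ℂ} (hz : z ≠ 0) (hw : w ≠ 0) (n : ℕ) (k l : Fin s0) :
    ‖(CmatC s0 A z w ^ n) k l‖ ≤ (CmatR s0 A ‖z‖ ‖w‖ ^ n) k l := by
  rw [CmatC_pow_apply hAsupp hz hw, CmatR_norm_pow_apply hAsupp hAnn hz hw]
  exact norm_sum_le _ _

lemma CmatR_pow_pos {z w : ℂ} (hz : z ≠ 0) (hw : w ≠ 0) {n : ℕ} {k l : Fin s0}
    (h : 0 < stepN (fullKernel s0 A) n (0, 0, k) (0, 0, l)) : 0 < (CmatR s0 A ‖z‖ ‖w‖ ^ n) k l := by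
  rw [CmatR_norm_pow_apply hAsupp hAnn hz hw]
  refine h.trans_le (le_of_eq_of_le ?_ (Finset.single_le_sum (fun v _ => norm_nonneg _)
    (box_mono (Nat.zero_le n) (by decide : ((0 : ℤ), (0 : ℤ)) ∈ box 0))))
  simp [abs_of_pos h]

variable (hirr : ChainIrreducible (fullKernel s0 A)) (hap : ChainAperiodic (fullKernel s0 A))
include hirr hap

lemma eventually_stepN_origin_pos (k : Fin s0) (v : ℤ × ℤ) (l : Fin s0) :
    ∀ᶠ n in atTop, 0 < stepN (fullKernel s0 A) n (0, 0, k) (v.1, v.2, l) :=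
  eventually_stepN_pos (fun _ _ => hAnn _ _ _ _) (fullKernel_support_finite hAsupp) hirr hap _ _

lemma exists_norm_CmatC_pow_apply_lt {z w : ℂ} (hz : z ≠ 0) (hw : w ≠ 0)
    (hzw : z ≠ ‖z‖ ∨ w ≠ ‖w‖) (k : Fin s0) :
    ∃ n, ‖(CmatC s0 A z w ^ n) k k‖ < (CmatR s0 A ‖z‖ ‖w‖ ^ n) k k := by
  obtain ⟨e, he, he₀, hζ⟩ : ∃ e ∈ box 1, e ≠ (0, 0) ∧ z ^ e.1 * w ^ e.2 ≠ ‖z ^ e.1 * w ^ e.2‖ := by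
    rcases hzw with h | h
    · exact ⟨(1, 0), by decide, by decide, by simpa using h⟩
    · exact ⟨(0, 1), by decide, by decide, by simpa using h⟩
  obtain ⟨n, hn, hp₀, hpe⟩ := ((eventually_ge_atTop 1).and
    ((eventually_stepN_origin_pos hAsupp hAnn hirr hap k (0, 0) k).and
      (eventually_stepN_origin_pos hAsupp hAnn hirr hap k e k))).exists
  refine ⟨n, ?_⟩
  rw [CmatC_pow_apply hAsupp hz hw, CmatR_norm_pow_apply hAsupp hAnn hz hw]
  refine norm_sum_lt_sum_norm_of_not_sameRay (box_mono hn (by decide : ((0 : ℤ), (0 : ℤ)) ∈ box 1))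
    (box_mono hn he) he₀.symm ?_
  simpa using Complex.not_sameRay_ofReal_ofReal_mul hp₀ hpe hζ

lemma exists_CmatR_pow_pos {z w : ℂ} (hz : z ≠ 0) (hw : w ≠ 0) :
    ∃ m, m ≠ 0 ∧ ∀ k l, 0 < (CmatR s0 A ‖z‖ ‖w‖ ^ m) k l := by
  obtain ⟨m, hm, hpos⟩ := ((eventually_ne_atTop 0).and (eventually_all.2 fun k =>
    eventually_all.2 fun l => eventually_stepN_origin_pos hAsupp hAnn hirr hap k (0, 0) l)).exists
  exact ⟨m, hm, fun k l => CmatR_pow_pos hAsupp hAnn hz hw (hpos k l)⟩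

lemma exists_norm_CmatC_pow_apply_le_mul [NeZero s0] {z w : ℂ} (hz : z ≠ 0) (hw : w ≠ 0)
    (hzw : z ≠ ‖z‖ ∨ w ≠ ‖w‖) :
    ∃ N q, N ≠ 0 ∧ 0 ≤ q ∧ q < 1 ∧
      ∀ i j, ‖(CmatC s0 A z w ^ N) i j‖ ≤ q * (CmatR s0 A ‖z‖ ‖w‖ ^ N) i j := by
  set M := CmatC s0 A z w
  set B := CmatR s0 A ‖z‖ ‖w‖
  have hMB := norm_CmatC_pow_apply_le hAsupp hAnn hz hw
  obtain ⟨n, hn⟩ := exists_norm_CmatC_pow_apply_lt hAsupp hAnn hirr hap hz hw hzw 0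
  obtain ⟨m, hm, hBm⟩ := exists_CmatR_pow_pos hAsupp hAnn hirr hap hz hw
  set G : Matrix (Fin s0) (Fin s0) ℝ := Matrix.of fun i j => ‖(M ^ n) i j‖
  have hMN : ∀ i j, ‖(M ^ (m + n + m)) i j‖ ≤ (B ^ m * G * B ^ m) i j := by
    rw [pow_add, pow_add]
    exact Matrix.norm_mul_apply_le_of_le
      (Matrix.norm_mul_apply_le_of_le (hMB m) fun i j => le_rfl) (hMB m)
  -- the gap `(Bⁿ)₀₀ - |(Mⁿ)₀₀|` is spread to every entry by the positive matrix `Bᵐ`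
  have hgap : ∀ i j, (B ^ m * G * B ^ m) i j + ((B ^ n) 0 0 - G 0 0) * ((B ^ m) i 0 * (B ^ m) 0 j)
      ≤ (B ^ (m + n + m)) i j := by
    rw [pow_add, pow_add]
    exact Matrix.mul_mul_apply_add_le (fun i j => (hBm i j).le) (hMB n) 0
  obtain ⟨q, hq₀, hq₁, hq⟩ := exists_lt_one_forall_le_mul (α := Fin s0 × Fin s0)
    (fun p => (norm_nonneg _).trans (hMN p.1 p.2))
    (fun p => mul_pos (sub_pos.2 hn) (mul_pos (hBm _ _) (hBm _ _))) (fun p => hgap p.1 p.2)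
  exact ⟨m + n + m, q, by omega, hq₀, hq₁, fun i j => (hMN i j).trans (hq (i, j))⟩

lemma spectralRadius_CmatC_lt [NeZero s0] {z w : ℂ} (hz : z ≠ 0) (hw : w ≠ 0)
    (hzw : z ≠ ‖z‖ ∨ w ≠ ‖w‖) :
    spectralRadius ℂ (CmatC s0 A z w) <
      spectralRadius ℂ ((CmatR s0 A ‖z‖ ‖w‖).map Complex.ofReal) := by
  set M := CmatC s0 A z w
  set B := CmatR s0 A ‖z‖ ‖w‖
  obtain ⟨N, q, hN, hq₀, hq₁, hq⟩ :=
    exists_norm_CmatC_pow_apply_le_mul hAsupp hAnn hirr hap hz hw hzw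
  obtain ⟨m, hm, hBm⟩ := exists_CmatR_pow_pos hAsupp hAnn hirr hap hz hw
  refine ENNReal.lt_of_pow_le_mul_pow (q := ‖(q : ℂ)‖₊) (N := N) ?_
    (Matrix.spectralRadius_map_ofReal_pos hm hBm).ne' (Matrix.spectralRadius_ne_top _) ?_
  · rw [← NNReal.coe_lt_coe, coe_nnnorm, Complex.norm_of_nonneg hq₀]
    exact hq₁
  calc spectralRadius ℂ M ^ N ≤ spectralRadius ℂ (M ^ N) := spectrum.spectralRadius_pow_le M N hN
    _ ≤ spectralRadius ℂ ((q • B ^ N).map Complex.ofReal) :=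
      Matrix.spectralRadius_le_of_norm_apply_le fun i j => hq i j
    _ = spectralRadius ℂ ((q : ℂ) • B.map Complex.ofReal ^ N) := by
      rw [← Matrix.map_ofReal_pow]
      congr 1
      ext i j
      simp
    _ = ‖(q : ℂ)‖₊ * spectralRadius ℂ (B.map Complex.ofReal) ^ N := by
      rw [spectralRadius_smul _ _ (spectrum.nonempty_of_isAlgClosed_of_finiteDimensional ℂ _),
        spectralRadius_pow_of_ne_zero _ hN]

end Kernel

end QBD

open QBD in
theorem statement13_general
    (s0 : ℕ) (hs0 : 1 ≤ s0)
    (A : ℤ → ℤ → Matrix (Fin s0) (Fin s0) ℝ)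
    (hAsupp : ∀ i j : ℤ, ¬(i ∈ Hs ∧ j ∈ Hs) → A i j = 0)
    (hAnn : ∀ i j : ℤ, ∀ k l, 0 ≤ A i j k l)
    (hfull_i : ChainIrreducible (fullKernel s0 A))
    (hfull_a : ChainAperiodic (fullKernel s0 A)) :
    ∀ z w : ℂ, z ≠ 0 → w ≠ 0 → (z ≠ (‖z‖ : ℂ) ∨ w ≠ (‖w‖ : ℂ)) →
      spr (CmatC s0 A z w) <
        spr (CmatC s0 A ((‖z‖ : ℝ) : ℂ) ((‖w‖ : ℝ) : ℂ)) := by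
  intro z w hz hw hzw
  have : NeZero s0 := ⟨by omega⟩
  rw [spr_eq_toReal_spectralRadius, spr_eq_toReal_spectralRadius, CmatC_ofReal]
  exact ENNReal.toReal_strict_mono (Matrix.spectralRadius_ne_top _)
    (spectralRadius_CmatC_lt hAsupp hAnn hfull_i hfull_a hz hw hzw)

open QBD in
/-- strict decrease of the spectral radius of `C(z,w)` off the
positive reals. -/
theorem statement13
    (s0 : ℕ) (hs0 : 1 ≤ s0)
    (A : ℤ → ℤ → Matrix (Fin s0) (Fin s0) ℝ)
    (hAsupp : ∀ i j : ℤ, ¬(i ∈ Hs ∧ j ∈ Hs) → A i j = 0)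
    (hAnn : ∀ i j : ℤ, ∀ k l, 0 ≤ A i j k l)
    (hAst : IsStochastic (∑ i ∈ Hs, ∑ j ∈ Hs, A i j))
    (hfull_i : ChainIrreducible (fullKernel s0 A))
    (hfull_a : ChainAperiodic (fullKernel s0 A)) :
    ∀ z w : ℂ, z ≠ 0 → w ≠ 0 → (z ≠ (‖z‖ : ℂ) ∨ w ≠ (‖w‖ : ℂ)) →
      spr (CmatC s0 A z w) <
        spr (CmatC s0 A ((‖z‖ : ℝ) : ℂ) ((‖w‖ : ℝ) : ℂ)) :=
  statement13_general s0 hs0 A hAsupp hAnn hfull_i hfull_a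
end

section
/- Suppose z ∈ ℂ∖{0} is such that the nonnegative matrix series N1(|z|), G1(|z|) and R1(|z|) converge entrywise. Then for every w ∈ ℂ∖{0}: det(I − C(z,w)) = 0 if and only if w is an eigenvalue of G1(z) or w^{−1} is an eigenvalue of R1(z). -/
namespace QBDSeries

/-- The index set `H = {-1, 0, 1}`. -/
def Hs : Finset ℤ := {-1, 0, 1}

/-- Partial sum of the first `k` entries of a sequence `σ : Fin n → ℤ`. -/
def psum {n : ℕ} (σ : Fin n → ℤ) (k : ℕ) : ℤ :=
  ∑ i ∈ Finset.univ.filter (fun i : Fin n => (i : ℕ) < k), σ i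

/-- Condition defining the index set `𝓘_n`. -/
def condQ (n : ℕ) (σ : Fin n → ℤ) : Prop :=
  (∀ k : ℕ, 1 ≤ k → k ≤ n - 1 → 0 ≤ psum σ k) ∧ psum σ n = 0

/-- Condition defining the index set `𝓘_{D,n}`. -/
def condD (n : ℕ) (σ : Fin n → ℤ) : Prop :=
  (∀ k : ℕ, 1 ≤ k → k ≤ n - 1 → 0 ≤ psum σ k) ∧ psum σ n = -1

/-- Condition defining the index set `𝓘_{U,n}`. -/
def condU (n : ℕ) (σ : Fin n → ℤ) : Prop :=
  (∀ k : ℕ, 1 ≤ k → k ≤ n - 1 → 1 ≤ psum σ k) ∧ psum σ n = 1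

/-- `A_{*,i}(z) = Σ_{j∈H} A_{j,i} z^j` over `ℂ`. -/
noncomputable def AstarC (s0 : ℕ) (A : ℤ → ℤ → Matrix (Fin s0) (Fin s0) ℝ) (z : ℂ) (i : ℤ) :
    Matrix (Fin s0) (Fin s0) ℂ :=
  ∑ j ∈ Hs, (z ^ j) • (A j i).map Complex.ofReal

/-- `A_{*,i}(z) = Σ_{j∈H} A_{j,i} z^j` over `ℝ`. -/
noncomputable def AstarR (s0 : ℕ) (A : ℤ → ℤ → Matrix (Fin s0) (Fin s0) ℝ) (z : ℝ) (i : ℤ) :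
    Matrix (Fin s0) (Fin s0) ℝ :=
  ∑ j ∈ Hs, (z ^ j) • A j i

open Classical in
/-- `Σ_{σ ∈ cond} A_{*,σ1}(z)⋯A_{*,σn}(z)` over `ℂ`. -/
noncomputable def pathSumC (s0 : ℕ) (A : ℤ → ℤ → Matrix (Fin s0) (Fin s0) ℝ) (z : ℂ) (n : ℕ)
    (cond : (Fin n → ℤ) → Prop) : Matrix (Fin s0) (Fin s0) ℂ :=
  ∑ σ : Fin n → {x : ℤ // x ∈ Hs},
    if cond (fun k => (σ k : ℤ)) then (List.ofFn fun k : Fin n => AstarC s0 A z (σ k : ℤ)).prod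
    else 0

open Classical in
/-- `Σ_{σ ∈ cond} A_{*,σ1}(z)⋯A_{*,σn}(z)` over `ℝ`. -/
noncomputable def pathSumR (s0 : ℕ) (A : ℤ → ℤ → Matrix (Fin s0) (Fin s0) ℝ) (z : ℝ) (n : ℕ)
    (cond : (Fin n → ℤ) → Prop) : Matrix (Fin s0) (Fin s0) ℝ :=
  ∑ σ : Fin n → {x : ℤ // x ∈ Hs},
    if cond (fun k => (σ k : ℤ)) then (List.ofFn fun k : Fin n => AstarR s0 A z (σ k : ℤ)).prod
    else 0

/-- `Q^{(n)}(z)` (complex); `Q^{(0)}(z) = I`. -/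
noncomputable def QmatC (s0 : ℕ) (A : ℤ → ℤ → Matrix (Fin s0) (Fin s0) ℝ) (z : ℂ) (n : ℕ) :
    Matrix (Fin s0) (Fin s0) ℂ := pathSumC s0 A z n (condQ n)

/-- `D^{(n)}(z)` (complex); it vanishes for `n = 0`. -/
noncomputable def DmatC (s0 : ℕ) (A : ℤ → ℤ → Matrix (Fin s0) (Fin s0) ℝ) (z : ℂ) (n : ℕ) :
    Matrix (Fin s0) (Fin s0) ℂ := pathSumC s0 A z n (condD n)

/-- `U^{(n)}(z)` (complex); it vanishes for `n = 0`. -/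
noncomputable def UmatC (s0 : ℕ) (A : ℤ → ℤ → Matrix (Fin s0) (Fin s0) ℝ) (z : ℂ) (n : ℕ) :
    Matrix (Fin s0) (Fin s0) ℂ := pathSumC s0 A z n (condU n)

/-- `Q^{(n)}(z)` (real). -/
noncomputable def QmatR (s0 : ℕ) (A : ℤ → ℤ → Matrix (Fin s0) (Fin s0) ℝ) (z : ℝ) (n : ℕ) :
    Matrix (Fin s0) (Fin s0) ℝ := pathSumR s0 A z n (condQ n)

/-- `D^{(n)}(z)` (real). -/
noncomputable def DmatR (s0 : ℕ) (A : ℤ → ℤ → Matrix (Fin s0) (Fin s0) ℝ) (z : ℝ) (n : ℕ) :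
    Matrix (Fin s0) (Fin s0) ℝ := pathSumR s0 A z n (condD n)

/-- `U^{(n)}(z)` (real). -/
noncomputable def UmatR (s0 : ℕ) (A : ℤ → ℤ → Matrix (Fin s0) (Fin s0) ℝ) (z : ℝ) (n : ℕ) :
    Matrix (Fin s0) (Fin s0) ℝ := pathSumR s0 A z n (condU n)

/-- `N1(z) = Σ_{n≥0} Q^{(n)}(z)`, entrywise (complex). -/
noncomputable def N1C (s0 : ℕ) (A : ℤ → ℤ → Matrix (Fin s0) (Fin s0) ℝ) (z : ℂ) :
    Matrix (Fin s0) (Fin s0) ℂ := Matrix.of fun i j => ∑' n : ℕ, QmatC s0 A z n i j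

/-- `G1(z) = Σ_{n≥1} D^{(n)}(z)`, entrywise (complex). -/
noncomputable def G1C (s0 : ℕ) (A : ℤ → ℤ → Matrix (Fin s0) (Fin s0) ℝ) (z : ℂ) :
    Matrix (Fin s0) (Fin s0) ℂ := Matrix.of fun i j => ∑' n : ℕ, DmatC s0 A z n i j

/-- `R1(z) = Σ_{n≥1} U^{(n)}(z)`, entrywise (complex). -/
noncomputable def R1C (s0 : ℕ) (A : ℤ → ℤ → Matrix (Fin s0) (Fin s0) ℝ) (z : ℂ) :
    Matrix (Fin s0) (Fin s0) ℂ := Matrix.of fun i j => ∑' n : ℕ, UmatC s0 A z n i j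

/-- `N1(z)` (real). -/
noncomputable def N1R (s0 : ℕ) (A : ℤ → ℤ → Matrix (Fin s0) (Fin s0) ℝ) (z : ℝ) :
    Matrix (Fin s0) (Fin s0) ℝ := Matrix.of fun i j => ∑' n : ℕ, QmatR s0 A z n i j

/-- `G1(z)` (real). -/
noncomputable def G1R (s0 : ℕ) (A : ℤ → ℤ → Matrix (Fin s0) (Fin s0) ℝ) (z : ℝ) :
    Matrix (Fin s0) (Fin s0) ℝ := Matrix.of fun i j => ∑' n : ℕ, DmatR s0 A z n i j

/-- `R1(z)` (real). -/
noncomputable def R1R (s0 : ℕ) (A : ℤ → ℤ → Matrix (Fin s0) (Fin s0) ℝ) (z : ℝ) :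
    Matrix (Fin s0) (Fin s0) ℝ := Matrix.of fun i j => ∑' n : ℕ, UmatR s0 A z n i j

/-- `C(z,w) = Σ_{i,j∈H} A_{i,j} z^i w^j` over `ℂ`. -/
noncomputable def CmatC (s0 : ℕ) (A : ℤ → ℤ → Matrix (Fin s0) (Fin s0) ℝ) (z w : ℂ) :
    Matrix (Fin s0) (Fin s0) ℂ :=
  ∑ i ∈ Hs, ∑ j ∈ Hs, (z ^ i * w ^ j) • (A i j).map Complex.ofReal

/-- `H1(z) = A_{*,0}(z) + A_{*,1}(z) N1(z) A_{*,-1}(z)` (complex). -/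
noncomputable def H1C (s0 : ℕ) (A : ℤ → ℤ → Matrix (Fin s0) (Fin s0) ℝ) (z : ℂ) :
    Matrix (Fin s0) (Fin s0) ℂ :=
  AstarC s0 A z 0 + AstarC s0 A z 1 * N1C s0 A z * AstarC s0 A z (-1)

/-- A matrix with row sums one and nonnegative entries. -/
def IsStochastic {n : ℕ} (M : Matrix (Fin n) (Fin n) ℝ) : Prop :=
  (∀ i j, 0 ≤ M i j) ∧ ∀ i, ∑ j, M i j = 1

end QBDSeries

/-!
Cutting a path at its first step shows `U⁽ⁿ⁺¹⁾ = A_{*,1} Q⁽ⁿ⁾` and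
`Q⁽ⁿ⁺¹⁾ = A_{*,0} Q⁽ⁿ⁾ + A_{*,1} L⁽ⁿ⁾`, where `L⁽ⁿ⁾` sums over paths from level 1 down to level 0;
cutting at the last step gives `D⁽ⁿ⁺¹⁾ = Q⁽ⁿ⁾ A_{*,-1}`, and cutting a path of `L⁽ⁿ⁾` at its first
passage to level 0 gives `L⁽ⁿ⁾ = Σₘ D⁽ᵐ⁾ Q⁽ⁿ⁻ᵐ⁾`. Every term at `z` is dominated entrywise by the
nonnegative term at `|z|`, so all series converge absolutely and summing yields
`G1 = N1 A_{*,-1}`, `R1 = A_{*,1} N1` and the renewal equation `N1 = I + A_{*,0} N1 + A_{*,1} G1 N1`.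
The last one says `(I - H1) N1 = I` for `H1 = A_{*,0} + A_{*,1} N1 A_{*,-1}`, and then
`I - C(z,w) = (I - w R1) (I - H1) (I - w⁻¹ G1)` with an invertible middle factor, so
`det (I - C(z,w)) = 0` exactly when `I - w R1` or `I - w⁻¹ G1` is singular.
-/

open Finset

namespace Matrix

section Series

variable {m : Type*} {R : Type*} [NormedRing R] {f g : ℕ → Matrix m m R}

lemma hasSum_iff {M : Matrix m m R} :
    HasSum f M ↔ ∀ i j, HasSum (fun n => f n i j) (M i j) :=
  Pi.hasSum.trans (forall_congr' fun _ => Pi.hasSum)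

lemma of_tsum_apply_eq {M : Matrix m m R} (h : HasSum f M) :
    Matrix.of (fun i j => ∑' n, f n i j) = M := by
  ext i j
  exact (hasSum_iff.1 h i j).tsum_eq

lemma summable_of_summable_norm_apply [CompleteSpace R]
    (hf : ∀ i j, Summable fun n => ‖f n i j‖) : Summable f :=
  Pi.summable.2 fun i => Pi.summable.2 fun j => (hf i j).of_norm

variable [Fintype m]

lemma summable_norm_mul_apply (hf : ∀ i j, Summable fun n => ‖f n i j‖) (B : Matrix m m R)
    (i j : m) : Summable fun n => ‖(f n * B) i j‖ := by
  refine Summable.of_nonneg_of_le (fun _ => norm_nonneg _) (fun n => ?_)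
    (summable_sum (s := univ) fun k _ => (hf i k).mul_right ‖B k j‖)
  rw [mul_apply]
  exact (norm_sum_le _ _).trans (sum_le_sum fun k _ => norm_mul_le _ _)

lemma hasSum_sum_range_mul_of_summable_norm_apply [CompleteSpace R]
    (hf : ∀ i j, Summable fun n => ‖f n i j‖) (hg : ∀ i j, Summable fun n => ‖g n i j‖) :
    HasSum (fun n => ∑ k ∈ range (n + 1), f k * g (n - k)) ((∑' n, f n) * ∑' n, g n) := by
  have hF := hasSum_iff.1 (summable_of_summable_norm_apply hf).hasSum
  have hG := hasSum_iff.1 (summable_of_summable_norm_apply hg).hasSum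
  refine hasSum_iff.2 fun i j => ?_
  have hcauchy : ∀ l, HasSum (fun n => ∑ k ∈ range (n + 1), f k i l * g (n - k) l j)
      ((∑' n, f n) i l * (∑' n, g n) l j) := fun l => by
    have h := hasSum_sum_range_mul_of_summable_norm (hf i l) (hg l j)
    rwa [(hF i l).tsum_eq, (hG l j).tsum_eq] at h
  convert hasSum_sum (s := univ) fun l _ => hcauchy l using 1
  · funext n
    simp only [sum_apply, mul_apply]
    exact sum_comm
  · exact mul_apply

end Series

section WienerHopf

variable {ι : Type*} [Fintype ι] [DecidableEq ι] {K : Type*} [Field K]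
  {Aₘ A₀ Aₚ N : Matrix ι ι K} {w : K}

lemma one_sub_mul_eq_one_of_renewal (hN : N = 1 + A₀ * N + Aₚ * (N * Aₘ * N)) :
    (1 - (A₀ + Aₚ * N * Aₘ)) * N = 1 :=
  calc (1 - (A₀ + Aₚ * N * Aₘ)) * N = N - A₀ * N - Aₚ * (N * Aₘ * N) := by noncomm_ring
    _ = 1 := by nth_rewrite 1 [hN]; abel

lemma wienerHopf_factorization (hN : N = 1 + A₀ * N + Aₚ * (N * Aₘ * N)) (hw : w ≠ 0) :
    1 - (w⁻¹ • Aₘ + A₀ + w • Aₚ) =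
      (1 - w • (Aₚ * N)) * (1 - (A₀ + Aₚ * N * Aₘ)) * (1 - w⁻¹ • (N * Aₘ)) := by
  have hleft := one_sub_mul_eq_one_of_renewal hN
  have hright : N * (1 - (A₀ + Aₚ * N * Aₘ)) = 1 := mul_eq_one_comm.mp hleft
  have e₁ : (1 - (A₀ + Aₚ * N * Aₘ)) * (1 - w⁻¹ • (N * Aₘ)) =
      1 - (A₀ + Aₚ * N * Aₘ) - w⁻¹ • Aₘ := by
    rw [mul_sub, mul_one, mul_smul_comm, ← mul_assoc, hleft, one_mul]
  have e₂ : Aₚ * N * (1 - (A₀ + Aₚ * N * Aₘ) - w⁻¹ • Aₘ) = Aₚ - w⁻¹ • (Aₚ * N * Aₘ) := by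
    rw [mul_sub, mul_assoc Aₚ N, hright, mul_one, mul_smul_comm]
  rw [mul_assoc, e₁, sub_mul, one_mul, smul_mul_assoc, e₂, smul_sub, smul_smul,
    mul_inv_cancel₀ hw, one_smul]
  abel

lemma det_one_sub_eq_zero_iff_of_renewal (hN : N = 1 + A₀ * N + Aₚ * (N * Aₘ * N)) (hw : w ≠ 0) :
    (1 - (w⁻¹ • Aₘ + A₀ + w • Aₚ)).det = 0 ↔
      (1 - w • (Aₚ * N)).det = 0 ∨ (1 - w⁻¹ • (N * Aₘ)).det = 0 := by
  have hH : (1 - (A₀ + Aₚ * N * Aₘ)).det ≠ 0 := by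
    refine left_ne_zero_of_mul_eq_one (b := N.det) ?_
    rw [← det_mul, one_sub_mul_eq_one_of_renewal hN, det_one]
  rw [wienerHopf_factorization hN hw, det_mul, det_mul, mul_eq_zero, mul_eq_zero, or_iff_left hH]

lemma det_one_sub_smul_eq_zero_iff {M : Matrix ι ι K} {c : K} (hc : c ≠ 0) :
    (1 - c • M).det = 0 ↔ ∃ v, v ≠ 0 ∧ M.mulVec v = c⁻¹ • v := by
  rw [← exists_mulVec_eq_zero_iff]
  refine exists_congr fun v => and_congr_right fun _ => ?_
  rw [sub_mulVec, one_mulVec, smul_mulVec, sub_eq_zero, eq_comm (a := M.mulVec v),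
    inv_smul_eq_iff₀ hc]

end WienerHopf

end Matrix

namespace QBDSeries

section Walks

variable {n : ℕ}

@[simp] lemma psum_zero (σ : Fin n → ℤ) : psum σ 0 = 0 := by
  simp [psum]

lemma psum_cons (c : ℤ) (τ : Fin n → ℤ) (k : ℕ) :
    psum (Fin.cons c τ) (k + 1) = c + psum τ k := by
  simp [psum, sum_filter, Fin.sum_univ_succ]

lemma psum_snoc_of_le (τ : Fin n → ℤ) (c : ℤ) {k : ℕ} (hk : k ≤ n) :
    psum (Fin.snoc τ c) k = psum τ k := by
  simp only [psum, sum_filter, Fin.sum_univ_castSucc, Fin.val_castSucc, Fin.snoc_castSucc,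
    Fin.val_last, add_eq_left, ite_eq_right_iff]
  omega

lemma psum_snoc_last (τ : Fin n → ℤ) (c : ℤ) :
    psum (Fin.snoc τ c) (n + 1) = psum τ n + c := by
  simp [psum, sum_filter, Fin.sum_univ_castSucc]

def extendByZero (σ : Fin n → ℤ) (i : ℕ) : ℤ := if h : i < n then σ ⟨i, h⟩ else 0

lemma psum_eq_sum_range (σ : Fin n → ℤ) (k : ℕ) :
    psum σ k = ∑ i ∈ range k, extendByZero σ i := by
  induction k with
  | zero => simp
  | succ k ih =>
    rw [sum_range_succ, ← ih]
    simp only [psum, sum_filter, extendByZero]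
    split_ifs with hk
    · rw [← Fintype.sum_ite_eq' (⟨k, hk⟩ : Fin n) σ, ← sum_add_distrib]
      refine sum_congr rfl fun i _ => ?_
      simp only [Fin.ext_iff]
      split_ifs <;> omega
    · rw [add_zero]
      refine sum_congr rfl fun i _ => ?_
      have := i.2
      split_ifs <;> omega

/-- The condition defining the paths from level 1 down to level 0 that stay nonnegative. -/
def condL (n : ℕ) (σ : Fin n → ℤ) : Prop :=
  (∀ k : ℕ, 1 ≤ k → k ≤ n - 1 → -1 ≤ psum σ k) ∧ psum σ n = -1

lemma forall_psum_cons_iff (P : ℤ → Prop) (c : ℤ) (τ : Fin n → ℤ) :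
    (∀ k, 1 ≤ k → k ≤ n + 1 - 1 → P (psum (Fin.cons c τ) k)) ↔
      ∀ k, k < n → P (c + psum τ k) := by
  constructor
  · intro h k hk
    simpa [psum_cons] using h (k + 1) (by omega) (by omega)
  · intro h k hk1 hk2
    obtain ⟨k, rfl⟩ := Nat.exists_eq_add_of_le' hk1
    rw [psum_cons]
    exact h k (by omega)

lemma condU_succ_cons_iff {c : ℤ} (hc : c ≤ 1) (τ : Fin n → ℤ) :
    condU (n + 1) (Fin.cons c τ) ↔ c = 1 ∧ condQ n τ := by
  rw [condU, condQ, forall_psum_cons_iff (1 ≤ ·), psum_cons]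
  constructor
  · rintro ⟨hk, hs⟩
    have hc1 : c = 1 := by
      rcases n.eq_zero_or_pos with rfl | hn
      · simpa using hs
      · linarith [hk 0 hn, psum_zero τ]
    subst hc1
    exact ⟨rfl, fun k hk1 hk2 => by linarith [hk k (by omega)], by linarith⟩
  · rintro ⟨rfl, hk, hs⟩
    refine ⟨fun k hk' => ?_, by omega⟩
    rcases k.eq_zero_or_pos with rfl | hk0
    · simp
    · linarith [hk k hk0 (by omega)]

lemma condQ_succ_cons_iff {c : ℤ} (hc : c ≤ 1) (τ : Fin n → ℤ) :
    condQ (n + 1) (Fin.cons c τ) ↔ (c = 0 ∧ condQ n τ) ∨ (c = 1 ∧ condL n τ) := by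
  rw [condQ, condQ, condL, forall_psum_cons_iff (0 ≤ ·), psum_cons]
  constructor
  · rintro ⟨hk, hs⟩
    have hc1 : c = 0 ∨ c = 1 := by
      rcases n.eq_zero_or_pos with rfl | hn
      · rw [psum_zero] at hs; omega
      · have := hk 0 hn; rw [psum_zero] at this; omega
    rcases hc1 with rfl | rfl
    · exact Or.inl ⟨rfl, fun k hk1 hk2 => by linarith [hk k (by omega)], by linarith⟩
    · exact Or.inr ⟨rfl, fun k hk1 hk2 => by linarith [hk k (by omega)], by linarith⟩
  · rintro (⟨rfl, hk, hs⟩ | ⟨rfl, hk, hs⟩) <;>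
    · refine ⟨fun k hk' => ?_, by omega⟩
      rcases k.eq_zero_or_pos with rfl | hk0
      · simp
      · linarith [hk k hk0 (by omega)]

lemma condD_succ_snoc_iff {c : ℤ} (hc : -1 ≤ c) (τ : Fin n → ℤ) :
    condD (n + 1) (Fin.snoc τ c) ↔ condQ n τ ∧ c = -1 := by
  have hint : ∀ k, k ≤ n → (0 ≤ psum (Fin.snoc τ c) k ↔ 0 ≤ psum τ k) := fun k hk => by
    rw [psum_snoc_of_le τ c hk]
  rw [condD, condQ, psum_snoc_last, Nat.add_sub_cancel]
  constructor
  · rintro ⟨hk, hs⟩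
    have hn : 0 ≤ psum τ n := by
      rcases n.eq_zero_or_pos with rfl | hn
      · simp
      · exact (hint n le_rfl).1 (hk n hn le_rfl)
    exact ⟨⟨fun k hk1 hk2 => (hint k (by omega)).1 (hk k hk1 (by omega)), by omega⟩, by omega⟩
  · rintro ⟨⟨hk, hs⟩, rfl⟩
    refine ⟨fun k hk1 hk2 => (hint k hk2).2 ?_, by omega⟩
    rcases eq_or_lt_of_le hk2 with rfl | hlt
    · exact hs.ge
    · exact hk k hk1 (by omega)

/- `takePrefix` and `dropPrefix` read `τ` through `extendByZero`, so they need no proof that the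
window fits inside `Fin n`. -/
def takePrefix (m : ℕ) (τ : Fin n → ℤ) : Fin m → ℤ := fun i => extendByZero τ i

def dropPrefix (m q : ℕ) (τ : Fin n → ℤ) : Fin q → ℤ := fun i => extendByZero τ (m + i)

lemma psum_takePrefix {m k : ℕ} (τ : Fin n → ℤ) (hk : k ≤ m) :
    psum (takePrefix m τ) k = psum τ k := by
  rw [psum_eq_sum_range, psum_eq_sum_range]
  refine sum_congr rfl fun i hi => ?_
  rw [extendByZero, dif_pos (by rw [mem_range] at hi; omega)]
  rfl

lemma psum_dropPrefix {m q k : ℕ} (τ : Fin n → ℤ) (hk : k ≤ q) :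
    psum (dropPrefix m q τ) k = psum τ (m + k) - psum τ m := by
  rw [psum_eq_sum_range, psum_eq_sum_range, psum_eq_sum_range, sum_range_add, add_sub_cancel_left]
  refine sum_congr rfl fun i hi => ?_
  rw [extendByZero, dif_pos (by rw [mem_range] at hi; omega)]
  rfl

lemma condD_takePrefix_and_condQ_dropPrefix_iff {m : ℕ} (hm : m ≤ n) (τ : Fin n → ℤ) :
    condD m (takePrefix m τ) ∧ condQ (n - m) (dropPrefix m (n - m) τ) ↔
      condL n τ ∧ psum τ m = -1 ∧ ∀ k < m, 0 ≤ psum τ k := by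
  simp only [condD, condQ, condL]
  constructor
  · rintro ⟨⟨hD, hDm⟩, ⟨hQ, hQn⟩⟩
    rw [psum_takePrefix τ le_rfl] at hDm
    rw [psum_dropPrefix τ le_rfl, Nat.add_sub_cancel' hm] at hQn
    have hbefore : ∀ k < m, 0 ≤ psum τ k := fun k hk => by
      rcases k.eq_zero_or_pos with rfl | hk0
      · simp
      · simpa [psum_takePrefix τ hk.le] using hD k hk0 (by omega)
    refine ⟨⟨fun k hk1 hk2 => ?_, by omega⟩, hDm, hbefore⟩
    rcases lt_trichotomy k m with hlt | rfl | hgt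
    · linarith [hbefore k hlt]
    · omega
    · have := hQ (k - m) (by omega) (by omega)
      rw [psum_dropPrefix τ (by omega), Nat.add_sub_cancel' hgt.le] at this
      omega
  · rintro ⟨⟨hL, hLn⟩, hm1, hbefore⟩
    refine ⟨⟨fun k hk1 hk2 => ?_, by rw [psum_takePrefix τ le_rfl, hm1]⟩,
      ⟨fun k hk1 hk2 => ?_, ?_⟩⟩
    · rw [psum_takePrefix τ (by omega)]
      exact hbefore k (by omega)
    · rw [psum_dropPrefix τ (by omega), hm1]
      linarith [hL (m + k) (by omega) (by omega)]
    · rw [psum_dropPrefix τ le_rfl, Nat.add_sub_cancel' hm, hLn, hm1, sub_self]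

lemma first_hit_iff_eq_find {τ : Fin n → ℤ} (hL : condL n τ) (m : ℕ) :
    (psum τ m = -1 ∧ ∀ k < m, 0 ≤ psum τ k) ↔ m = Nat.find (⟨n, hL.2⟩ : ∃ m, psum τ m = -1) := by
  have hex : ∃ m, psum τ m = -1 := ⟨n, hL.2⟩
  constructor
  · rintro ⟨hm, hbefore⟩
    refine le_antisymm ?_ (Nat.find_min' hex hm)
    by_contra! hlt
    linarith [hbefore _ hlt, Nat.find_spec hex]
  · rintro rfl
    refine ⟨Nat.find_spec hex, fun k hk => ?_⟩
    have hne := Nat.find_min hex hk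
    have hkn : k < n := hk.trans_le (Nat.find_min' hex hL.2)
    rcases k.eq_zero_or_pos with rfl | hk0
    · simp
    · have := hL.1 k hk0 (by omega)
      omega

open Classical in
lemma sum_ite_condD_and_condQ_eq_ite_condL {M : Type*} [AddCommMonoid M] (τ : Fin n → ℤ)
    (w : M) :
    ∑ m ∈ range (n + 1),
        (if condD m (takePrefix m τ) ∧ condQ (n - m) (dropPrefix m (n - m) τ) then w else 0) =
      if condL n τ then w else 0 := by
  rw [sum_congr rfl fun m hm => if_congr (condD_takePrefix_and_condQ_dropPrefix_iff
    (Nat.lt_succ_iff.1 (mem_range.1 hm)) τ) rfl rfl]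
  by_cases hL : condL n τ
  · simp only [hL, true_and, first_hit_iff_eq_find hL, if_true]
    rw [sum_ite_eq', if_pos (mem_range.2 (Nat.lt_succ_of_le (Nat.find_min' _ hL.2)))]
  · simp [hL]

end Walks

lemma sum_Hs {M : Type*} [AddCommMonoid M] (f : ℤ → M) :
    ∑ x : {x : ℤ // x ∈ Hs}, f x = f (-1) + f 0 + f 1 := by
  rw [sum_coe_sort Hs f, Hs, sum_insert (by decide), sum_insert (by decide), sum_singleton,
    add_assoc]

section PathSums

variable {R : Type*} [Semiring R] (a : ℤ → R)

/- `pathSumC s0 A z` and `pathSumR s0 A r` are `pathSum` for the weights `AstarC s0 A z` and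
`AstarR s0 A r`, definitionally. -/
open Classical in
noncomputable def pathSum (n : ℕ) (cond : (Fin n → ℤ) → Prop) : R :=
  ∑ σ : Fin n → {x : ℤ // x ∈ Hs},
    if cond (fun k => (σ k : ℤ)) then (List.ofFn fun k => a (σ k)).prod else 0

open Classical in
lemma pathSum_zero (cond : (Fin 0 → ℤ) → Prop) :
    pathSum a 0 cond = if cond ![] then 1 else 0 := by
  simp [pathSum, Subsingleton.elim _ (![] : Fin 0 → ℤ)]

lemma pathSum_false (n : ℕ) : pathSum a n (fun _ => False) = 0 := by
  simp [pathSum]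

lemma pathSum_succ_cons (n : ℕ) (cond : (Fin (n + 1) → ℤ) → Prop) :
    pathSum a (n + 1) cond =
      a (-1) * pathSum a n (fun τ => cond (Fin.cons (-1) τ)) +
        a 0 * pathSum a n (fun τ => cond (Fin.cons 0 τ)) +
          a 1 * pathSum a n (fun τ => cond (Fin.cons 1 τ)) := by
  rw [← sum_Hs fun x => a x * pathSum a n (fun τ => cond (Fin.cons x τ)), pathSum,
    ← (Fin.consEquiv fun _ => {x : ℤ // x ∈ Hs}).sum_comp, Fintype.sum_prod_type]
  refine sum_congr rfl fun x _ => ?_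
  simp only [pathSum, mul_sum, Fin.consEquiv_apply, List.ofFn_succ, Fin.cons_zero, Fin.cons_succ,
    List.prod_cons, mul_ite, mul_zero]
  refine sum_congr rfl fun τ _ => ?_
  congr 2
  exact Fin.comp_cons Subtype.val x τ

lemma pathSum_succ_snoc (n : ℕ) (cond : (Fin (n + 1) → ℤ) → Prop) :
    pathSum a (n + 1) cond =
      pathSum a n (fun τ => cond (Fin.snoc τ (-1))) * a (-1) +
        pathSum a n (fun τ => cond (Fin.snoc τ 0)) * a 0 +
          pathSum a n (fun τ => cond (Fin.snoc τ 1)) * a 1 := by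
  rw [← sum_Hs fun x => pathSum a n (fun τ => cond (Fin.snoc τ x)) * a x, pathSum,
    ← (Fin.snocEquiv fun _ => {x : ℤ // x ∈ Hs}).sum_comp, Fintype.sum_prod_type]
  refine sum_congr rfl fun x _ => ?_
  simp only [pathSum, sum_mul, Fin.snocEquiv_apply, List.ofFn_succ', Fin.snoc_castSucc,
    Fin.snoc_last, List.prod_concat, ite_mul, zero_mul]
  refine sum_congr rfl fun τ _ => ?_
  congr 2
  exact Fin.comp_snoc Subtype.val τ x

lemma pathSum_mul_pathSum (p q : ℕ) (c₁ : (Fin p → ℤ) → Prop) (c₂ : (Fin q → ℤ) → Prop) :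
    pathSum a p c₁ * pathSum a q c₂ =
      pathSum a (p + q) (fun τ => c₁ (takePrefix p τ) ∧ c₂ (dropPrefix p q τ)) := by
  rw [pathSum, pathSum, sum_mul_sum, ← Fintype.sum_prod_type', pathSum,
    ← (Fin.appendEquiv p q).sum_comp]
  refine sum_congr rfl fun σ _ => ?_
  have htake : takePrefix p (fun k => ((Fin.appendEquiv p q σ k : {x : ℤ // x ∈ Hs}) : ℤ)) =
      fun k => (σ.1 k : ℤ) := by
    funext i
    simp [takePrefix, extendByZero, ← Fin.castAdd_mk, i.2.trans_le (Nat.le_add_right p q)]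
  have hdrop : dropPrefix p q (fun k => ((Fin.appendEquiv p q σ k : {x : ℤ // x ∈ Hs}) : ℤ)) =
      fun k => (σ.2 k : ℤ) := by
    funext i
    simp [dropPrefix, extendByZero, ← Fin.natAdd_mk]
  rw [htake, hdrop, ite_zero_mul_ite_zero, List.ofFn_add]
  simp

lemma pathSum_condL (n : ℕ) :
    pathSum a n (condL n) =
      ∑ m ∈ range (n + 1), pathSum a m (condD m) * pathSum a (n - m) (condQ (n - m)) := by
  have hsplit : ∀ m ∈ range (n + 1),
      pathSum a m (condD m) * pathSum a (n - m) (condQ (n - m)) =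
        pathSum a n
          (fun τ => condD m (takePrefix m τ) ∧ condQ (n - m) (dropPrefix m (n - m) τ)) := by
    intro m hm
    rw [pathSum_mul_pathSum, Nat.add_sub_cancel' (Nat.lt_succ_iff.1 (mem_range.1 hm))]
  rw [sum_congr rfl hsplit]
  simp only [pathSum]
  rw [sum_comm]
  refine sum_congr rfl fun σ _ => ?_
  convert (sum_ite_condD_and_condQ_eq_ite_condL _ _).symm

lemma pathSum_condQ_zero : pathSum a 0 (condQ 0) = 1 := by
  rw [pathSum_zero, if_pos ⟨fun k hk1 hk2 => by omega, psum_zero _⟩]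

lemma pathSum_condD_zero : pathSum a 0 (condD 0) = 0 := by
  rw [pathSum_zero, if_neg fun h => by simpa using h.2]

lemma pathSum_condU_zero : pathSum a 0 (condU 0) = 0 := by
  rw [pathSum_zero, if_neg fun h => by simpa using h.2]

lemma pathSum_condU_succ (n : ℕ) :
    pathSum a (n + 1) (condU (n + 1)) = a 1 * pathSum a n (condQ n) := by
  simp [pathSum_succ_cons, condU_succ_cons_iff, pathSum_false]

lemma pathSum_condD_succ (n : ℕ) :
    pathSum a (n + 1) (condD (n + 1)) = pathSum a n (condQ n) * a (-1) := by
  simp [pathSum_succ_snoc, condD_succ_snoc_iff, pathSum_false]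

lemma pathSum_condQ_succ (n : ℕ) :
    pathSum a (n + 1) (condQ (n + 1)) = a 0 * pathSum a n (condQ n) +
      a 1 * ∑ m ∈ range (n + 1), pathSum a m (condD m) * pathSum a (n - m) (condQ (n - m)) := by
  simp [pathSum_succ_cons, condQ_succ_cons_iff, pathSum_condL, pathSum_false]

end PathSums

section Domination

variable {m : Type*} [Fintype m] [DecidableEq m] {𝕜 : Type*} [NormedRing 𝕜] [NormOneClass 𝕜]
  {a : ℤ → Matrix m m 𝕜} {b : ℤ → Matrix m m ℝ}

lemma norm_list_prod_map_apply_le (hb : ∀ x i j, 0 ≤ b x i j)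
    (hab : ∀ x i j, ‖a x i j‖ ≤ b x i j) (l : List ℤ) (i j : m) :
    ‖(l.map a).prod i j‖ ≤ (l.map b).prod i j := by
  induction l generalizing i with
  | nil => by_cases h : i = j <;> simp [h]
  | cons x l ih =>
    rw [List.map_cons, List.prod_cons, List.map_cons, List.prod_cons, Matrix.mul_apply,
      Matrix.mul_apply]
    refine (norm_sum_le _ _).trans (sum_le_sum fun k _ => (norm_mul_le _ _).trans ?_)
    exact mul_le_mul (hab x i k) (ih k) (norm_nonneg _) (hb x i k)

lemma norm_pathSum_apply_le (hb : ∀ x i j, 0 ≤ b x i j) (hab : ∀ x i j, ‖a x i j‖ ≤ b x i j)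
    (n : ℕ) (cond : (Fin n → ℤ) → Prop) (i j : m) :
    ‖pathSum a n cond i j‖ ≤ pathSum b n cond i j := by
  simp only [pathSum, Matrix.sum_apply]
  refine (norm_sum_le _ _).trans (sum_le_sum fun σ _ => ?_)
  split_ifs
  · simpa only [List.map_ofFn, Function.comp_def] using
      norm_list_prod_map_apply_le hb hab (List.ofFn fun k => (σ k : ℤ)) i j
  · simp

end Domination

section QBD

variable {s0 : ℕ} {A : ℤ → ℤ → Matrix (Fin s0) (Fin s0) ℝ}

lemma AstarR_apply_nonneg (hA : ∀ i j : ℤ, ∀ k l, 0 ≤ A i j k l) {r : ℝ} (hr : 0 ≤ r)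
    (x : ℤ) (k l : Fin s0) : 0 ≤ AstarR s0 A r x k l := by
  simp only [AstarR, Matrix.sum_apply, Matrix.smul_apply, smul_eq_mul]
  exact sum_nonneg fun j _ => mul_nonneg (zpow_nonneg hr j) (hA j x k l)

lemma norm_AstarC_apply_le (hA : ∀ i j : ℤ, ∀ k l, 0 ≤ A i j k l) (z : ℂ) (x : ℤ)
    (k l : Fin s0) : ‖AstarC s0 A z x k l‖ ≤ AstarR s0 A ‖z‖ x k l := by
  simp only [AstarC, AstarR, Matrix.sum_apply, Matrix.smul_apply, Matrix.map_apply, smul_eq_mul]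
  refine (norm_sum_le _ _).trans (sum_le_sum fun j _ => ?_)
  rw [norm_mul, norm_zpow, Complex.norm_real, Real.norm_of_nonneg (hA j x k l)]

lemma norm_QmatC_apply_le (hA : ∀ i j : ℤ, ∀ k l, 0 ≤ A i j k l) (z : ℂ) (n : ℕ)
    (k l : Fin s0) : ‖QmatC s0 A z n k l‖ ≤ QmatR s0 A ‖z‖ n k l :=
  norm_pathSum_apply_le (AstarR_apply_nonneg hA (norm_nonneg z)) (norm_AstarC_apply_le hA z) n _
    k l

lemma CmatC_eq (z w : ℂ) :
    CmatC s0 A z w = w⁻¹ • AstarC s0 A z (-1) + AstarC s0 A z 0 + w • AstarC s0 A z 1 := by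
  have hcol : ∀ j, ∑ i ∈ Hs, (z ^ i * w ^ j) • (A i j).map Complex.ofReal =
      w ^ j • AstarC s0 A z j := fun j => by
    simp only [AstarC, smul_sum, smul_smul, mul_comm]
  rw [CmatC, sum_comm, sum_congr rfl fun j _ => hcol j, ← sum_coe_sort,
    sum_Hs fun j => w ^ j • AstarC s0 A z j, zpow_neg_one, zpow_zero, zpow_one, one_smul]

variable {z : ℂ}

lemma DmatC_zero : DmatC s0 A z 0 = 0 := pathSum_condD_zero _

lemma UmatC_zero : UmatC s0 A z 0 = 0 := pathSum_condU_zero _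

lemma QmatC_zero : QmatC s0 A z 0 = 1 := pathSum_condQ_zero _

lemma DmatC_succ (n : ℕ) : DmatC s0 A z (n + 1) = QmatC s0 A z n * AstarC s0 A z (-1) :=
  pathSum_condD_succ _ n

lemma UmatC_succ (n : ℕ) : UmatC s0 A z (n + 1) = AstarC s0 A z 1 * QmatC s0 A z n :=
  pathSum_condU_succ _ n

lemma QmatC_succ (n : ℕ) :
    QmatC s0 A z (n + 1) = AstarC s0 A z 0 * QmatC s0 A z n +
      AstarC s0 A z 1 * ∑ m ∈ range (n + 1), DmatC s0 A z m * QmatC s0 A z (n - m) :=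
  pathSum_condQ_succ _ n

lemma hasSum_QmatC (hQ : ∀ i j, Summable fun n => ‖QmatC s0 A z n i j‖) :
    HasSum (QmatC s0 A z) (N1C s0 A z) := by
  have h := (Matrix.summable_of_summable_norm_apply hQ).hasSum
  rwa [← Matrix.of_tsum_apply_eq h] at h

lemma hasSum_DmatC (hQ : ∀ i j, Summable fun n => ‖QmatC s0 A z n i j‖) :
    HasSum (DmatC s0 A z) (N1C s0 A z * AstarC s0 A z (-1)) := by
  have h : HasSum (fun n => DmatC s0 A z (n + 1)) (N1C s0 A z * AstarC s0 A z (-1)) := by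
    simpa only [DmatC_succ] using (hasSum_QmatC hQ).mul_right (AstarC s0 A z (-1))
  simpa [DmatC_zero] using (hasSum_nat_add_iff 1).1 h

lemma hasSum_UmatC (hQ : ∀ i j, Summable fun n => ‖QmatC s0 A z n i j‖) :
    HasSum (UmatC s0 A z) (AstarC s0 A z 1 * N1C s0 A z) := by
  have h : HasSum (fun n => UmatC s0 A z (n + 1)) (AstarC s0 A z 1 * N1C s0 A z) := by
    simpa only [UmatC_succ] using (hasSum_QmatC hQ).mul_left (AstarC s0 A z 1)
  simpa [UmatC_zero] using (hasSum_nat_add_iff 1).1 h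

lemma G1C_eq (hQ : ∀ i j, Summable fun n => ‖QmatC s0 A z n i j‖) :
    G1C s0 A z = N1C s0 A z * AstarC s0 A z (-1) :=
  Matrix.of_tsum_apply_eq (hasSum_DmatC hQ)

lemma R1C_eq (hQ : ∀ i j, Summable fun n => ‖QmatC s0 A z n i j‖) :
    R1C s0 A z = AstarC s0 A z 1 * N1C s0 A z :=
  Matrix.of_tsum_apply_eq (hasSum_UmatC hQ)

lemma N1C_eq (hQ : ∀ i j, Summable fun n => ‖QmatC s0 A z n i j‖) :
    N1C s0 A z = 1 + AstarC s0 A z 0 * N1C s0 A z +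
      AstarC s0 A z 1 * (G1C s0 A z * N1C s0 A z) := by
  have hD : ∀ i j, Summable fun n => ‖DmatC s0 A z n i j‖ := fun i j =>
    (summable_nat_add_iff 1).1 (by
      simpa only [DmatC_succ] using Matrix.summable_norm_mul_apply hQ (AstarC s0 A z (-1)) i j)
  have hconv := Matrix.hasSum_sum_range_mul_of_summable_norm_apply hD hQ
  rw [(hasSum_DmatC hQ).tsum_eq, (hasSum_QmatC hQ).tsum_eq, ← G1C_eq hQ] at hconv
  have hsucc : HasSum (fun n => QmatC s0 A z (n + 1))
      (AstarC s0 A z 0 * N1C s0 A z + AstarC s0 A z 1 * (G1C s0 A z * N1C s0 A z)) := by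
    simpa only [QmatC_succ] using
      ((hasSum_QmatC hQ).mul_left (AstarC s0 A z 0)).add (hconv.mul_left (AstarC s0 A z 1))
  have h := (hasSum_nat_add_iff 1).1 hsucc
  rw [sum_range_one, QmatC_zero] at h
  rw [add_assoc, add_comm 1]
  exact (h.unique (hasSum_QmatC hQ)).symm

end QBD

end QBDSeries

open QBDSeries in
theorem statement14_general
    (s0 : ℕ)
    (A : ℤ → ℤ → Matrix (Fin s0) (Fin s0) ℝ)
    (hAnn : ∀ i j : ℤ, ∀ k l, 0 ≤ A i j k l)
    (z : ℂ)
    (hN : ∀ i j, Summable fun n : ℕ => QmatR s0 A ‖z‖ n i j) :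
    ∀ w : ℂ, w ≠ 0 →
      (Matrix.det ((1 : Matrix (Fin s0) (Fin s0) ℂ) - CmatC s0 A z w) = 0 ↔
        (∃ v : Fin s0 → ℂ, v ≠ 0 ∧ (G1C s0 A z).mulVec v = w • v) ∨
        (∃ v : Fin s0 → ℂ, v ≠ 0 ∧ (R1C s0 A z).mulVec v = w⁻¹ • v)) := by
  intro w hw
  have hQ : ∀ i j, Summable fun n => ‖QmatC s0 A z n i j‖ := fun i j =>
    (hN i j).of_nonneg_of_le (fun _ => norm_nonneg _) (norm_QmatC_apply_le hAnn z · i j)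
  have hrenewal := N1C_eq hQ
  rw [G1C_eq hQ] at hrenewal
  rw [CmatC_eq, Matrix.det_one_sub_eq_zero_iff_of_renewal hrenewal hw, ← R1C_eq hQ, ← G1C_eq hQ,
    Matrix.det_one_sub_smul_eq_zero_iff hw, Matrix.det_one_sub_smul_eq_zero_iff (inv_ne_zero hw),
    inv_inv, or_comm]

open QBDSeries in
/-- `det(I − C(z,w)) = 0` iff `w` is an eigenvalue of `G1(z)` or
`w⁻¹` is an eigenvalue of `R1(z)`. -/
theorem statement14
    (s0 : ℕ) (hs0 : 1 ≤ s0)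
    (A : ℤ → ℤ → Matrix (Fin s0) (Fin s0) ℝ)
    (hAsupp : ∀ i j : ℤ, ¬(i ∈ Hs ∧ j ∈ Hs) → A i j = 0)
    (hAnn : ∀ i j : ℤ, ∀ k l, 0 ≤ A i j k l)
    (hAst : IsStochastic (∑ i ∈ Hs, ∑ j ∈ Hs, A i j))
    (z : ℂ) (hz : z ≠ 0)
    (hN : ∀ i j, Summable fun n : ℕ => QmatR s0 A ‖z‖ n i j)
    (hG : ∀ i j, Summable fun n : ℕ => DmatR s0 A ‖z‖ n i j)
    (hR : ∀ i j, Summable fun n : ℕ => UmatR s0 A ‖z‖ n i j) :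
    ∀ w : ℂ, w ≠ 0 →
      (Matrix.det ((1 : Matrix (Fin s0) (Fin s0) ℂ) - CmatC s0 A z w) = 0 ↔
        (∃ v : Fin s0 → ℂ, v ≠ 0 ∧ (G1C s0 A z).mulVec v = w • v) ∨
        (∃ v : Fin s0 → ℂ, v ≠ 0 ∧ (R1C s0 A z).mulVec v = w⁻¹ • v)) :=
  statement14_general s0 A hAnn z hN
end
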